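/- arXiv:1806.10742 — 9 statements merged into one kernel-verified Lean document; each statement's English description precedes it below -/
import Mathlib

section
/- Let B be an integral domain of characteristic zero and D : B → B a nonzero locally nilpotent derivation. If f ∈ B satisfies f ∣ D(f) in B, then D(f) = 0. -/
/-!
If `D f = f g` with `f, g ≠ 0`, let `m` and `n` be the largest exponents with `D^[m] f ≠ 0` and
`D^[n] g ≠ 0`. By the general Leibniz rule only one term of `D^[m+n] (f g)` survives, namely
`(m+n).choose m • (D^[m] f * D^[n] g)`, which is nonzero in a domain of characteristic zero.
But `D^[m+n] (f g) = D^[m+n+1] f = 0`.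
-/

/-- A function `D : B → B` is a locally nilpotent derivation if it is additive,
satisfies the Leibniz rule, and every element is annihilated by some iterate of `D`. -/
def IsLND {B : Type*} [CommRing B] (D : B → B) : Prop :=
  (∀ a b : B, D (a + b) = D a + D b) ∧
  (∀ a b : B, D (a * b) = a * D b + D a * b) ∧
  (∀ x : B, ∃ n : ℕ, D^[n] x = 0)

theorem Function.exists_iterate_ne_zero_and_iterate_succ_eq_zero {M : Type*} [Zero M]
    {f : M → M} {a : M} (ha : a ≠ 0) {n : ℕ} (hn : f^[n] a = 0) :
    ∃ m, f^[m] a ≠ 0 ∧ f^[m + 1] a = 0 := by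
  induction n with
  | zero => exact absurd hn ha
  | succ n ih => exact (em (f^[n] a = 0)).elim ih fun h ↦ ⟨n, h, hn⟩

namespace Derivation

open Finset

variable {R A : Type*} [CommSemiring R] [CommSemiring A] [Algebra R A] (D : Derivation R A A)

theorem iterate_apply_mul (n : ℕ) (a b : A) :
    D^[n] (a * b) = ∑ ij ∈ antidiagonal n, n.choose ij.1 • (D^[ij.1] a * D^[ij.2] b) := by
  induction n with
  | zero => simp
  | succ n ih =>
    rw [sum_antidiagonal_choose_succ_nsmul (fun i j ↦ D^[i] a * D^[j] b) n]
    simp only [Function.iterate_succ_apply', ih, map_sum, map_nsmul, leibniz, smul_eq_mul,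
      smul_add, sum_add_distrib]
    congr 1
    refine sum_congr rfl fun ⟨i, j⟩ hij ↦ ?_
    rw [n.choose_symm_of_eq_add (mem_antidiagonal.1 hij).symm, mul_comm]

theorem iterate_eq_zero_of_le {a : A} {m k : ℕ} (hm : D^[m] a = 0) (hk : m ≤ k) :
    D^[k] a = 0 := by
  rw [← Nat.sub_add_cancel hk, Function.iterate_add_apply, hm, iterate_map_zero]

theorem iterate_add_apply_mul {a b : A} {m n : ℕ} (ha : D^[m + 1] a = 0) (hb : D^[n + 1] b = 0) :
    D^[m + n] (a * b) = (m + n).choose m • (D^[m] a * D^[n] b) := by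
  rw [iterate_apply_mul, sum_eq_single (m, n)]
  · rintro ⟨i, j⟩ hij hne
    rw [HasAntidiagonal.mem_antidiagonal] at hij
    rw [Ne, Prod.mk.injEq] at hne
    rcases Nat.lt_or_ge m i with hi | hi
    · rw [D.iterate_eq_zero_of_le ha hi, zero_mul, smul_zero]
    · rw [D.iterate_eq_zero_of_le hb (by omega), mul_zero, smul_zero]
  · simp

theorem apply_eq_zero_of_dvd_apply [NoZeroDivisors A] [CharZero A]
    (hD : ∀ x, ∃ n, D^[n] x = 0) {f : A} (h : f ∣ D f) : D f = 0 := by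
  by_contra hDf
  obtain ⟨g, hg⟩ := h
  have hf : f ≠ 0 := by rintro rfl; exact hDf D.map_zero
  have hg0 : g ≠ 0 := by rintro rfl; exact hDf (by rw [hg, mul_zero])
  obtain ⟨k, hk⟩ := hD f
  obtain ⟨l, hl⟩ := hD g
  obtain ⟨m, hfm, hfm'⟩ := Function.exists_iterate_ne_zero_and_iterate_succ_eq_zero hf hk
  obtain ⟨n, hgn, hgn'⟩ := Function.exists_iterate_ne_zero_and_iterate_succ_eq_zero hg0 hl
  have hchoose : (m + n).choose m ≠ 0 := (Nat.choose_pos (Nat.le_add_right m n)).ne'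
  apply mul_ne_zero (Nat.cast_ne_zero.2 hchoose) (mul_ne_zero hfm hgn)
  rw [← nsmul_eq_mul, ← D.iterate_add_apply_mul hfm' hgn', ← hg, ← Function.iterate_succ_apply]
  exact D.iterate_eq_zero_of_le hfm' (by omega)

end Derivation

def IsLND.toDerivation {B : Type*} [CommRing B] {D : B → B} (hD : IsLND D) :
    Derivation ℤ B B :=
  Derivation.mk' (AddMonoidHom.mk' D hD.1).toIntLinearMap fun a b ↦ by
    simp [hD.2.1, mul_comm]

theorem stmt0_general {B : Type*} [CommRing B] [IsDomain B] [CharZero B]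
    (D : B → B) (hD : IsLND D) (f : B) (h : f ∣ D f) :
    D f = 0 :=
  hD.toDerivation.apply_eq_zero_of_dvd_apply hD.2.2 h

theorem stmt0 {B : Type*} [CommRing B] [IsDomain B] [CharZero B]
    (D : B → B) (hD : IsLND D) (hD0 : D ≠ 0) (f : B) (h : f ∣ D f) :
    D f = 0 :=
  stmt0_general D hD f h
end

section
/- Let B be an integral domain of characteristic zero, D : B → B a nonzero locally nilpotent derivation, and D' the unique extension of D to a derivation of Frac(B). Then Frac(ker D) = ker D', where Frac(ker D) is viewed as a subfield of Frac(B). -/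
/-- For a nonzero locally nilpotent derivation `D` of a domain `B` of characteristic zero,
the subfield of `Frac B` generated by `ker D` equals the kernel of the unique extension
`D'` of `D` to a derivation of `Frac B`. -/
theorem stmt3 {B L : Type*} [CommRing B] [IsDomain B] [CharZero B]
    [Field L] [Algebra B L] [IsFractionRing B L]
    (D : B → B) (hD : IsLND D) (hD0 : D ≠ 0)
    (D' : L → L)
    (hadd : ∀ a b : L, D' (a + b) = D' a + D' b)
    (hmul : ∀ a b : L, D' (a * b) = a * D' b + D' a * b)
    (hext : ∀ b : B, D' (algebraMap B L b) = algebraMap B L (D b)) :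
    Subfield.closure ((algebraMap B L) '' {b : B | D b = 0}) = {x : L | D' x = 0} := by
  classical
  obtain ⟨hDadd, hDmul, hnil⟩ := hD
  have hD'0 : D' 0 = 0 := by
    have h := hadd 0 0
    rw [add_zero] at h
    exact (left_eq_add.mp h)
  have hD'1 : D' 1 = 0 := by
    have h := hmul 1 1
    rw [mul_one, one_mul, mul_one] at h
    exact (left_eq_add.mp h)
  have hneg : ∀ x : L, D' (-x) = - D' x := by
    intro x
    have h := hadd x (-x)
    rw [add_neg_cancel, hD'0] at h
    exact (neg_eq_of_add_eq_zero_right h.symm).symm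
  have hinv : ∀ x : L, D' x = 0 → D' x⁻¹ = 0 := by
    intro x hx
    by_cases h0 : x = 0
    · simpa [h0] using hD'0
    · have h := hmul x x⁻¹
      rw [mul_inv_cancel₀ h0, hD'1, hx, zero_mul, add_zero] at h
      exact (mul_eq_zero.mp h.symm).resolve_left h0
  let K : Subfield L :=
  { carrier := {x : L | D' x = 0}
    mul_mem' := by
      intro a b ha hb
      have h := hmul a b
      simp only [Set.mem_setOf_eq] at *
      rw [ha, hb, mul_zero, zero_mul, add_zero] at h
      exact h
    one_mem' := hD'1
    add_mem' := by
      intro a b ha hb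
      have h := hadd a b
      simp only [Set.mem_setOf_eq] at *
      rw [ha, hb, add_zero] at h
      exact h
    zero_mem' := hD'0
    neg_mem' := by
      intro a ha
      simp only [Set.mem_setOf_eq] at *
      rw [hneg, ha, neg_zero]
    inv_mem' := fun x hx => hinv x hx }
  have : Subfield.closure ((algebraMap B L) '' {b : B | D b = 0}) = K := by
    apply le_antisymm
    · rw [Subfield.closure_le]
      rintro y ⟨b, hb, rfl⟩
      show D' (algebraMap B L b) = 0
      rw [hext, hb, map_zero]
    · intro x hx
      have hx : D' x = 0 := hx
      obtain ⟨⟨a, b⟩, hab⟩ := IsLocalization.surj (nonZeroDivisors B) x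
      have hbne : (b : B) ≠ 0 := nonZeroDivisors.coe_ne_zero b
      have key : ∀ n : ℕ, algebraMap B L (D^[n] a) = x * algebraMap B L (D^[n] (b : B)) := by
        intro n
        induction n with
        | zero => simpa using hab.symm
        | succ n ih =>
          rw [Function.iterate_succ_apply', Function.iterate_succ_apply']
          calc algebraMap B L (D (D^[n] a)) = D' (algebraMap B L (D^[n] a)) := (hext _).symm
            _ = D' (x * algebraMap B L (D^[n] (b : B))) := by rw [ih]
            _ = x * D' (algebraMap B L (D^[n] (b : B)))
                + D' x * algebraMap B L (D^[n] (b : B)) := hmul _ _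
            _ = x * algebraMap B L (D (D^[n] (b : B))) := by
                rw [hx, hext, zero_mul, add_zero]
      obtain ⟨m, hm⟩ := hnil (b : B)
      have hex : ∃ n : ℕ, D^[n] (b : B) = 0 := ⟨m, hm⟩
      set n₀ := Nat.find hex with hn₀
      have hn₀pos : 0 < n₀ := by
        rcases Nat.eq_zero_or_pos n₀ with h | h
        · exfalso; apply hbne
          have := Nat.find_spec hex
          rwa [← hn₀, h, Function.iterate_zero_apply] at this
        · exact h
      set ν := n₀ - 1 with hν
      have hνlt : ν < n₀ := Nat.sub_lt hn₀pos one_pos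
      have hqne : D^[ν] (b : B) ≠ 0 := Nat.find_min hex hνlt
      have hsucc : ν + 1 = n₀ := Nat.succ_pred_eq_of_pos hn₀pos
      have hq0 : D (D^[ν] (b : B)) = 0 := by
        have := Nat.find_spec hex
        rw [← hn₀, ← hsucc, Function.iterate_succ_apply'] at this
        exact this
      have hp0 : D (D^[ν] a) = 0 := by
        have h1 := key (ν + 1)
        rw [Function.iterate_succ_apply', Function.iterate_succ_apply', hq0,
          map_zero, mul_zero] at h1
        exact IsFractionRing.injective B L (by rw [h1, map_zero])
      have hqL : algebraMap B L (D^[ν] (b : B)) ≠ 0 := by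
        intro h
        exact hqne (IsFractionRing.injective B L (by rw [h, map_zero]))
      have hxeq : x = algebraMap B L (D^[ν] a) * (algebraMap B L (D^[ν] (b : B)))⁻¹ := by
        field_simp
        exact (key ν).symm
      have hmem1 : algebraMap B L (D^[ν] a) ∈
          Subfield.closure ((algebraMap B L) '' {b : B | D b = 0}) :=
        Subfield.subset_closure ⟨_, hp0, rfl⟩
      have hmem2 : algebraMap B L (D^[ν] (b : B)) ∈
          Subfield.closure ((algebraMap B L) '' {b : B | D b = 0}) :=
        Subfield.subset_closure ⟨_, hq0, rfl⟩
      rw [hxeq]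
      exact mul_mem hmem1 (inv_mem hmem2)
  rw [this]
  rfl
end

section
/- Let B be an integral domain of characteristic zero, D : B → B a nonzero locally nilpotent derivation with kernel A, and K = Frac(A) ⊆ Frac(B). Then K is algebraically closed in Frac(B). -/
set_option linter.unusedSectionVars false
section Aux

variable {B L : Type*} [CommRing B] [IsDomain B] [Field L] [Algebra B L]
  [IsFractionRing B L] (D : B → B)

/-- extension of `D` to the fraction field, via `IsLocalization.sec`. -/
noncomputable def del (x : L) : L :=
  (algebraMap B L (D (IsLocalization.sec (nonZeroDivisors B) x).1) *
      algebraMap B L ((IsLocalization.sec (nonZeroDivisors B) x).2 : B) -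
    algebraMap B L (IsLocalization.sec (nonZeroDivisors B) x).1 *
      algebraMap B L (D ((IsLocalization.sec (nonZeroDivisors B) x).2 : B))) /
  (algebraMap B L ((IsLocalization.sec (nonZeroDivisors B) x).2 : B)) ^ 2

variable (hadd : ∀ a b : B, D (a + b) = D a + D b)
  (hmul : ∀ a b : B, D (a * b) = a * D b + D a * b)

include hmul in
theorem del_spec (b s : B) (hs : s ≠ 0) (x : L)
    (hx : x * algebraMap B L s = algebraMap B L b) :
    del D x = (algebraMap B L (D b) * algebraMap B L s -
      algebraMap B L b * algebraMap B L (D s)) / (algebraMap B L s) ^ 2 := by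
  set φ := algebraMap B L with hφ
  set b' := (IsLocalization.sec (nonZeroDivisors B) x).1 with hb'
  set s' := ((IsLocalization.sec (nonZeroDivisors B) x).2 : B) with hs'def
  have inj : Function.Injective φ := IsFractionRing.injective B L
  have hs'0 : s' ≠ 0 :=
    mem_nonZeroDivisors_iff_ne_zero.mp (IsLocalization.sec (nonZeroDivisors B) x).2.prop
  have hφs : φ s ≠ 0 := fun h => hs (IsFractionRing.to_map_eq_zero_iff.mp h)
  have hφs' : φ s' ≠ 0 := fun h => hs'0 (IsFractionRing.to_map_eq_zero_iff.mp h)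
  have h1 : x * φ s' = φ b' := IsLocalization.sec_spec (nonZeroDivisors B) x
  have hcross : b * s' = b' * s := inj (by rw [map_mul, map_mul, ← hx, ← h1]; ring)
  have hE : b * D s' + D b * s' = b' * D s + D b' * s := by
    rw [← hmul, ← hmul, hcross]
  have hB : (D b * s - b * D s) * s' ^ 2 = (D b' * s' - b' * D s') * s ^ 2 := by
    linear_combination (s * s') * hE - (D s * s' + D s' * s) * hcross
  have hB' : (φ (D b) * φ s - φ b * φ (D s)) * φ s' ^ 2 =
      (φ (D b') * φ s' - φ b' * φ (D s')) * φ s ^ 2 := by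
    have := congrArg φ hB
    simp only [map_mul, map_sub, map_pow] at this
    exact this
  unfold del
  rw [div_eq_div_iff (pow_ne_zero _ hφs') (pow_ne_zero _ hφs)]
  exact hB'.symm

include hmul in
theorem D_one : D 1 = 0 := by
  have h := hmul 1 1
  rw [mul_one, one_mul, mul_one] at h
  exact (left_eq_add.mp h)

include hadd in
theorem D_zero : D 0 = 0 := by
  have h := hadd 0 0
  rw [add_zero] at h
  exact (left_eq_add.mp h)

include hmul in
theorem del_map (b : B) : del D (algebraMap B L b) = algebraMap B L (D b) := by
  rw [del_spec D hmul b 1 one_ne_zero _ (by rw [map_one, mul_one])]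
  rw [D_one D hmul]
  simp

include hadd hmul in
theorem del_zero : del D (0 : L) = 0 := by
  have := del_map (L := L) D hmul 0
  rwa [map_zero, D_zero D hadd, map_zero] at this

include hmul in
theorem del_one : del D (1 : L) = 0 := by
  have := del_map (L := L) D hmul 1
  rwa [map_one, D_one D hmul, map_zero] at this

include hadd hmul in
theorem del_add (x y : L) : del D (x + y) = del D x + del D y := by
  set φ := algebraMap B L with hφ
  obtain ⟨⟨b, s⟩, hx⟩ := IsLocalization.surj (nonZeroDivisors B) x
  obtain ⟨⟨c, t⟩, hy⟩ := IsLocalization.surj (nonZeroDivisors B) y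
  simp only at hx hy
  have hs0 : (s : B) ≠ 0 := mem_nonZeroDivisors_iff_ne_zero.mp s.prop
  have ht0 : (t : B) ≠ 0 := mem_nonZeroDivisors_iff_ne_zero.mp t.prop
  have hφs : φ s ≠ 0 := fun h => hs0 (IsFractionRing.to_map_eq_zero_iff.mp h)
  have hφt : φ t ≠ 0 := fun h => ht0 (IsFractionRing.to_map_eq_zero_iff.mp h)
  have hxy : (x + y) * φ ((s : B) * (t : B)) = φ (b * t + c * s) := by
    rw [map_mul, map_add, map_mul, map_mul, ← hx, ← hy]; ring
  rw [del_spec D hmul _ _ (mul_ne_zero hs0 ht0) _ hxy,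
    del_spec D hmul b s hs0 x hx, del_spec D hmul c t ht0 y hy]
  have e1 : D (b * t + c * s) = (b * D t + D b * t) + (c * D s + D c * s) := by
    rw [hadd, hmul, hmul]
  have e2 : D ((s : B) * t) = s * D t + D s * t := hmul s t
  rw [e1, e2]
  simp only [map_add, map_mul]
  field_simp
  ring

include hmul in
theorem del_mul (x y : L) : del D (x * y) = x * del D y + del D x * y := by
  set φ := algebraMap B L with hφ
  obtain ⟨⟨b, s⟩, hx⟩ := IsLocalization.surj (nonZeroDivisors B) x
  obtain ⟨⟨c, t⟩, hy⟩ := IsLocalization.surj (nonZeroDivisors B) y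
  simp only at hx hy
  have hs0 : (s : B) ≠ 0 := mem_nonZeroDivisors_iff_ne_zero.mp s.prop
  have ht0 : (t : B) ≠ 0 := mem_nonZeroDivisors_iff_ne_zero.mp t.prop
  have hφs : φ s ≠ 0 := fun h => hs0 (IsFractionRing.to_map_eq_zero_iff.mp h)
  have hφt : φ t ≠ 0 := fun h => ht0 (IsFractionRing.to_map_eq_zero_iff.mp h)
  have hxy : (x * y) * φ ((s : B) * (t : B)) = φ (b * c) := by
    rw [map_mul, map_mul, ← hx, ← hy]; ring
  have hx' : x = φ b / φ s := by rw [eq_div_iff hφs]; exact hx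
  have hy' : y = φ c / φ t := by rw [eq_div_iff hφt]; exact hy
  rw [del_spec D hmul _ _ (mul_ne_zero hs0 ht0) _ hxy,
    del_spec D hmul b s hs0 x hx, del_spec D hmul c t ht0 y hy, hx', hy']
  have e1 : D (b * c) = b * D c + D b * c := hmul b c
  have e2 : D ((s : B) * t) = s * D t + D s * t := hmul s t
  rw [e1, e2]
  simp only [map_add, map_mul]
  field_simp
  ring

end Aux

section Aux2

variable {B L : Type*} [CommRing B] [IsDomain B] [Field L] [Algebra B L]
  [IsFractionRing B L] (D : B → B)
  (hadd : ∀ a b : B, D (a + b) = D a + D b)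
  (hmul : ∀ a b : B, D (a * b) = a * D b + D a * b)

include hadd hmul

theorem del_neg (x : L) : del D (-x) = -del D x := by
  have h := del_add D hadd hmul x (-x)
  rw [add_neg_cancel, del_zero D hadd hmul] at h
  linear_combination -h

theorem del_const (x : L)
    (hx : x ∈ Subfield.closure ((algebraMap B L) '' {b : B | D b = 0})) :
    del D x = 0 := by
  let S : Subfield L :=
    { carrier := {z : L | del D z = 0}
      one_mem' := del_one D hmul
      zero_mem' := del_zero D hadd hmul
      add_mem' := fun {a b} ha hb => by
        show del D (a + b) = 0
        rw [del_add D hadd hmul, ha, hb, add_zero]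
      mul_mem' := fun {a b} ha hb => by
        show del D (a * b) = 0
        rw [del_mul D hmul, ha, hb, mul_zero, zero_mul, add_zero]
      neg_mem' := fun {a} ha => by
        show del D (-a) = 0
        rw [del_neg D hadd hmul, ha, neg_zero]
      inv_mem' := fun a ha => by
        show del D a⁻¹ = 0
        by_cases h : a = 0
        · rw [h, inv_zero]; exact del_zero D hadd hmul
        · have h1 : del D (a * a⁻¹) = 0 := by
            rw [mul_inv_cancel₀ h]; exact del_one D hmul
          rw [del_mul D hmul, ha, zero_mul, add_zero] at h1
          exact (mul_eq_zero.mp h1).resolve_left h }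
  have hle : Subfield.closure ((algebraMap B L) '' {b : B | D b = 0}) ≤ S := by
    rw [Subfield.closure_le]
    rintro _ ⟨b, hb, rfl⟩
    show del D (algebraMap B L b) = 0
    rw [del_map D hmul, show D b = 0 from hb, map_zero]
  exact hle hx

theorem del_pow (x : L) (n : ℕ) :
    del D (x ^ (n + 1)) = (n + 1 : L) * x ^ n * del D x := by
  induction n with
  | zero => simp
  | succ n ih =>
    have : x ^ (n + 2) = x * x ^ (n + 1) := by ring
    rw [this, del_mul D hmul, ih]
    push_cast
    ring

theorem del_eval (x : L) (K : Subfield L) (hK0 : ∀ z ∈ K, del D z = 0)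
    (p : Polynomial K) :
    del D (p.eval₂ K.subtype x) =
      (Polynomial.derivative p).eval₂ K.subtype x * del D x := by
  induction p using Polynomial.induction_on with
  | C a =>
    rw [Polynomial.eval₂_C, Polynomial.derivative_C, Polynomial.eval₂_zero, zero_mul]
    exact hK0 _ a.prop
  | add p q hp hq =>
    rw [Polynomial.eval₂_add, del_add D hadd hmul, hp, hq, Polynomial.derivative_add,
      Polynomial.eval₂_add]
    ring
  | monomial n a _ =>
    rw [Polynomial.eval₂_mul, Polynomial.eval₂_C, Polynomial.eval₂_X_pow,
      del_mul D hmul, show del D (K.subtype a) = 0 from hK0 _ a.prop,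
      del_pow D hadd hmul]
    rw [Polynomial.derivative_C_mul, Polynomial.derivative_X_pow]
    rw [Polynomial.eval₂_mul, Polynomial.eval₂_C, Polynomial.eval₂_mul,
      Polynomial.eval₂_C, Polynomial.eval₂_X_pow]
    have : ((n + 1 : ℕ) : K) = ((n : K) + 1) := by push_cast; ring
    rw [Nat.add_sub_cancel]
    simp only [map_add, map_one, map_natCast]
    push_cast
    ring

end Aux2

section Aux3

variable {B L : Type*} [CommRing B] [IsDomain B] [Field L] [Algebra B L]
  [IsFractionRing B L] (D : B → B)
  (hadd : ∀ a b : B, D (a + b) = D a + D b)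
  (hmul : ∀ a b : B, D (a * b) = a * D b + D a * b)

include hadd hmul

theorem del_alg [CharZero L] (x : L) (K : Subfield L) (hK0 : ∀ z ∈ K, del D z = 0) :
    ∀ n (p : Polynomial K), p.natDegree ≤ n → p ≠ 0 →
      p.eval₂ K.subtype x = 0 → del D x = 0 := by
  haveI : CharZero K := ⟨fun a b h => by
    have : ((a : ℕ) : L) = ((b : ℕ) : L) := by
      rw [show ((a : ℕ) : L) = ((a : K) : L) by push_cast; rfl,
        show ((b : ℕ) : L) = ((b : K) : L) by push_cast; rfl, h]
    exact Nat.cast_injective this⟩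
  have deg0 : ∀ p : Polynomial K, p.natDegree = 0 → p.eval₂ K.subtype x = 0 → p = 0 := by
    intro p hdeg hev
    have hp : p = Polynomial.C (p.coeff 0) := Polynomial.eq_C_of_natDegree_eq_zero hdeg
    rw [hp, Polynomial.eval₂_C] at hev
    have : p.coeff 0 = 0 := by
      have := Subtype.coe_injective (a₁ := p.coeff 0) (a₂ := (0 : K)) (by simpa using hev)
      exact this
    rw [hp, this, map_zero]
  intro n
  induction n with
  | zero =>
    intro p hdeg hp0 hev
    exact absurd (deg0 p (Nat.le_zero.mp hdeg) hev) hp0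
  | succ n ih =>
    intro p hdeg hp0 hev
    rcases Nat.eq_zero_or_pos p.natDegree with h0 | hpos
    · exact absurd (deg0 p h0 hev) hp0
    · have hder0 : Polynomial.derivative p ≠ 0 := by
        intro h
        have := Polynomial.natDegree_eq_zero_of_derivative_eq_zero h
        omega
      have hdegd : (Polynomial.derivative p).natDegree ≤ n := by
        have := Polynomial.natDegree_derivative_lt (p := p) (by omega)
        omega
      by_cases hev' : (Polynomial.derivative p).eval₂ K.subtype x = 0
      · exact ih _ hdegd hder0 hev'
      · have h := del_eval D hadd hmul x K hK0 p
        rw [hev, del_zero D hadd hmul] at h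
        exact ((mul_eq_zero.mp h.symm).resolve_left hev')

theorem descent : ∀ (n : ℕ) (b s : B), s ≠ 0 → D^[n] s = 0 → D b * s = b * D s →
    ∀ x : L, x * algebraMap B L s = algebraMap B L b →
      x ∈ Subfield.closure ((algebraMap B L) '' {b : B | D b = 0}) := by
  intro n
  induction n with
  | zero => intro b s hs hiter; exact absurd hiter hs
  | succ n ih =>
    intro b s hs hiter heq x hx
    set φ := algebraMap B L with hφ
    have hφs : φ s ≠ 0 := fun h => hs (IsFractionRing.to_map_eq_zero_iff.mp h)
    by_cases hds : D s = 0
    · have hdb : D b = 0 := by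
        have h1 : D b * s = 0 := by rw [heq, hds, mul_zero]
        exact (mul_eq_zero.mp h1).resolve_right hs
      have hx' : x = φ b / φ s := by rw [eq_div_iff hφs]; exact hx
      rw [hx']
      exact Subfield.div_mem _ (Subfield.subset_closure ⟨b, hdb, rfl⟩)
        (Subfield.subset_closure ⟨s, hds, rfl⟩)
    · apply ih (D b) (D s) hds
      · rw [← Function.iterate_succ_apply]; exact hiter
      · have h2 : D (D b * s) = D (b * D s) := congrArg D heq
        rw [hmul, hmul] at h2
        have h3 : D (D b) * s = b * D (D s) := by linear_combination h2
        apply mul_right_cancel₀ hs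
        linear_combination D s * h3 - D (D s) * heq
      · have hφds : φ (D s) ≠ 0 := fun h => hds (IsFractionRing.to_map_eq_zero_iff.mp h)
        apply mul_right_cancel₀ hφs
        calc x * φ (D s) * φ s = (x * φ s) * φ (D s) := by ring
          _ = φ b * φ (D s) := by rw [hx]
          _ = φ (b * D s) := by rw [map_mul]
          _ = φ (D b * s) := by rw [heq]
          _ = φ (D b) * φ s := by rw [map_mul]

end Aux3

/-- For a nonzero locally nilpotent derivation `D` of a domain `B` of characteristic zero
with kernel `A`, the subfield `K = Frac A` of `L = Frac B` is algebraically closed in `L`. -/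
theorem stmt4 {B L : Type*} [CommRing B] [IsDomain B] [CharZero B]
    [Field L] [Algebra B L] [IsFractionRing B L]
    (D : B → B) (hD : IsLND D) (hD0 : D ≠ 0)
    (K : Subfield L) (hK : K = Subfield.closure ((algebraMap B L) '' {b : B | D b = 0}))
    (x : L) (hx : ∃ p : Polynomial ↥K, p ≠ 0 ∧ Polynomial.eval₂ K.subtype x p = 0) :
    x ∈ K := by
  obtain ⟨hadd, hmul, hnil⟩ := hD
  haveI : CharZero L := charZero_of_injective_algebraMap (IsFractionRing.injective B L)
  have hK0 : ∀ z ∈ K, del D z = 0 := by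
    intro z hz
    exact del_const D hadd hmul z (hK ▸ hz)
  obtain ⟨p, hp0, hpev⟩ := hx
  have hδ : del D x = 0 := del_alg D hadd hmul x K hK0 p.natDegree p le_rfl hp0 hpev
  obtain ⟨⟨b, s⟩, hbs⟩ := IsLocalization.surj (nonZeroDivisors B) x
  simp only at hbs
  have hs0 : (s : B) ≠ 0 := mem_nonZeroDivisors_iff_ne_zero.mp s.prop
  have hφs : algebraMap B L s ≠ 0 := fun h => hs0 (IsFractionRing.to_map_eq_zero_iff.mp h)
  rw [del_spec D hmul b s hs0 x hbs, div_eq_zero_iff, sub_eq_zero] at hδ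
  have hnum : algebraMap B L (D b) * algebraMap B L (s : B) =
      algebraMap B L b * algebraMap B L (D (s : B)) :=
    hδ.resolve_right (pow_ne_zero _ hφs)
  have heq : D b * (s : B) = b * D (s : B) :=
    IsFractionRing.injective B L (by rw [map_mul, map_mul]; exact hnum)
  obtain ⟨n, hn⟩ := hnil s
  rw [hK]
  exact descent D hadd hmul n b s hs0 hn heq x hbs
end

section
/- Let B be a domain and let 𝒜₁*(B) be the set of subrings A of B such that A is algebraically closed in B and the localization of B at the nonzero elements of A is a polynomial ring in one variable over Frac(A). If A₁, A₂ ∈ 𝒜₁*(B) and A₁ ⊆ A₂, then A₁ = A₂. -/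
/-- The subfield `Frac A` of the fraction field `L` of `B` generated by a subring `A ⊆ B`. -/
def fracField {B L : Type*} [CommRing B] [Field L] [Algebra B L] (A : Subring B) :
    Subfield L :=
  Subfield.closure ((algebraMap B L) '' A)

/-- `A ∈ 𝒜₁*(B)`: the subring `A` is algebraically closed in `B`, and the localization
`B_A` of `B` at `A \ {0}` (realized inside `L = Frac B` as the subring generated by the
image of `B` together with `Frac A`) is a polynomial ring in one variable over `Frac A`,
i.e. it is generated over `Frac A` by a single element `t` transcendental over `Frac A`. -/
def IsA1Star {B L : Type*} [CommRing B] [Field L] [Algebra B L] (A : Subring B) : Prop :=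
  (∀ x : B, (∃ p : Polynomial ↥A, p ≠ 0 ∧ Polynomial.eval₂ A.subtype x p = 0) → x ∈ A) ∧
  ∃ t : L,
    Subring.closure (Set.range (algebraMap B L) ∪ ((fracField (L := L) A) : Set L)) =
      Subring.closure (((fracField (L := L) A) : Set L) ∪ {t}) ∧
    (∀ p : Polynomial ↥(fracField (L := L) A),
      Polynomial.eval₂ (fracField (L := L) A).subtype t p = 0 → p = 0)

open Polynomial

/-- If an element of `K₁[t₁]` lies in `K₂ ⊇ K₁` but not in `K₁`, then `t₁` is
integral over `K₂`. -/
lemma aux_isIntegral {L : Type*} [Field L] (K₁ K₂ : Subfield L) (hK : K₁ ≤ K₂) (t₁ α : L)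
    (hα₂ : α ∈ K₂) (hα : α ∉ K₁) (p : Polynomial ↥K₁) (hp : aeval t₁ p = α) :
    IsIntegral ↥K₂ t₁ := by
  set q : Polynomial ↥K₂ := p.map (Subfield.inclusion hK) - C ⟨α, hα₂⟩ with hqdef
  have hcomp : (algebraMap ↥K₂ L).comp (Subfield.inclusion hK) = algebraMap ↥K₁ L := by
    ext x; rfl
  have hqeval : aeval t₁ q = 0 := by
    rw [hqdef, map_sub, aeval_C, aeval_def, eval₂_map, hcomp, ← aeval_def, hp]
    exact sub_self _
  have hqne : q ≠ 0 := by
    intro h0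
    rw [hqdef, sub_eq_zero] at h0
    have hdeg : p.natDegree = 0 := by
      have := Polynomial.natDegree_map_eq_of_injective ((Subfield.inclusion hK).injective) p
      rw [h0, natDegree_C] at this
      exact this.symm
    apply hα
    rw [p.eq_C_of_natDegree_eq_zero hdeg, aeval_C] at hp
    rw [← hp]
    exact (p.coeff 0).2
  exact isAlgebraic_iff_isIntegral.mp ⟨q, hqne, hqeval⟩

/-- The main contradiction: if some element of the image of `B` lies outside `K₁` while
`B` localizes to `K₁[t₁]` and to `K₂[t₂]` with `t₂` transcendental over `K₂ ⊇ K₁`,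
we get a contradiction. -/
lemma aux_false {B L : Type*} [CommRing B] [Field L] [Algebra B L]
    (K₁ K₂ : Subfield L) (hK : K₁ ≤ K₂) (t₁ t₂ α : L)
    (hT₁ : Subring.closure (Set.range (algebraMap B L) ∪ (K₁ : Set L)) =
      Subring.closure ((K₁ : Set L) ∪ {t₁}))
    (hT₂ : Subring.closure (Set.range (algebraMap B L) ∪ (K₂ : Set L)) =
      Subring.closure ((K₂ : Set L) ∪ {t₂}))
    (htr₂ : ∀ p : Polynomial ↥K₂, Polynomial.eval₂ K₂.subtype t₂ p = 0 → p = 0)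
    (hα₂ : α ∈ K₂) (hα : α ∉ K₁)
    (hα1 : α ∈ Subring.closure ((K₁ : Set L) ∪ {t₁})) : False := by
  have hadj : Subring.closure ((K₁ : Set L) ∪ {t₁}) = (Algebra.adjoin ↥K₁ {t₁}).toSubring := by
    rw [Algebra.adjoin_eq_ring_closure]
    congr 2
    ext x
    exact ⟨fun hx => ⟨⟨x, hx⟩, rfl⟩, fun ⟨y, hy⟩ => hy ▸ y.2⟩
  rw [hadj] at hα1
  have hα1' : α ∈ Algebra.adjoin ↥K₁ {t₁} := hα1
  rw [Algebra.adjoin_singleton_eq_range_aeval] at hα1'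
  obtain ⟨p, hp0⟩ := hα1'
  have ht₁alg : IsIntegral ↥K₂ t₁ := aux_isIntegral K₁ K₂ hK t₁ α hα₂ hα p hp0
  set F := integralClosure ↥K₂ L with hFdef
  have hK₂F : (K₂ : Set L) ⊆ (F : Set L) := fun x hx =>
    (isIntegral_algebraMap (x := (⟨x, hx⟩ : ↥K₂)) : IsIntegral ↥K₂ x)
  have hcl1 : Subring.closure ((K₁ : Set L) ∪ {t₁}) ≤ F.toSubring := by
    apply Subring.closure_le.mpr
    apply Set.union_subset
    · exact fun x hx => hK₂F (hK hx)
    · intro x hx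
      rw [Set.mem_singleton_iff] at hx
      exact hx ▸ ht₁alg
  have hrange : Set.range (algebraMap B L) ⊆ (F : Set L) := by
    rintro - ⟨b, rfl⟩
    have : algebraMap B L b ∈ Subring.closure ((K₁ : Set L) ∪ {t₁}) := by
      rw [← hT₁]; exact Subring.subset_closure (Or.inl ⟨b, rfl⟩)
    exact hcl1 this
  have ht₂F : t₂ ∈ F.toSubring := by
    have ht₂mem : t₂ ∈ Subring.closure ((K₂ : Set L) ∪ {t₂}) :=
      Subring.subset_closure (Or.inr rfl)
    rw [← hT₂] at ht₂mem
    exact Subring.closure_le.mpr (Set.union_subset hrange hK₂F) ht₂mem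
  have ht₂alg : IsAlgebraic ↥K₂ t₂ := isAlgebraic_iff_isIntegral.mpr ht₂F
  obtain ⟨r, hr0, hre⟩ := ht₂alg
  exact hr0 (htr₂ r hre)

/-- An element of `B` whose image lies in `Frac A₁` is algebraic over `A₁`. -/
lemma aux_mem {B L : Type*} [CommRing B] [Field L] [Algebra B L]
    (hinj : Function.Injective (algebraMap B L))
    (A₁ : Subring B)
    (halg₁ : ∀ x : B, (∃ p : Polynomial ↥A₁, p ≠ 0 ∧ Polynomial.eval₂ A₁.subtype x p = 0) →
      x ∈ A₁)
    (a : B) (hα : algebraMap B L a ∈ fracField (L := L) A₁) : a ∈ A₁ := by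
  rw [fracField, Subfield.mem_closure_iff] at hα
  obtain ⟨y, hy, z, hz, hyz⟩ := hα
  have himg : Subring.closure ((algebraMap B L) '' (A₁ : Set B)) = A₁.map (algebraMap B L) := by
    rw [← Subring.coe_map, Subring.closure_eq]
  rw [himg] at hy hz
  obtain ⟨x, hx, rfl⟩ := hy
  obtain ⟨w, hw, rfl⟩ := hz
  by_cases hw0 : w = 0
  · subst hw0
    have h0 : algebraMap B L a = 0 := by
      rw [← hyz, map_zero, div_zero]
    have ha0 : a = 0 := hinj (by rw [h0, map_zero])
    exact ha0 ▸ A₁.zero_mem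
  · have hwz : algebraMap B L w ≠ 0 := fun h0 => hw0 (hinj (by rw [h0, map_zero]))
    have key : a * w = x := by
      rw [div_eq_iff hwz] at hyz
      apply hinj
      rw [map_mul, ← hyz]
    set P : Polynomial ↥A₁ := C ⟨w, hw⟩ * X - C ⟨x, hx⟩ with hPdef
    have hPne : P ≠ 0 := by
      intro h0
      apply hw0
      have hc := congrArg (fun q : Polynomial ↥A₁ => q.coeff 1) h0
      simp only [hPdef, coeff_sub, coeff_C_mul, coeff_X_one, mul_one, coeff_C,
        if_neg one_ne_zero, sub_zero, coeff_zero] at hc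
      exact congrArg Subtype.val hc
    have hPeval : Polynomial.eval₂ A₁.subtype a P = 0 := by
      rw [hPdef]
      simp only [eval₂_sub, eval₂_mul, eval₂_C, eval₂_X]
      show w * a - x = 0
      rw [mul_comm, key, sub_self]
    exact halg₁ a ⟨P, hPne, hPeval⟩

/-- If `A₁, A₂ ∈ 𝒜₁*(B)` and `A₁ ⊆ A₂` then `A₁ = A₂`. -/
theorem stmt7 {B L : Type*} [CommRing B] [IsDomain B]
    [Field L] [Algebra B L] [IsFractionRing B L]
    (A₁ A₂ : Subring B) (h₁ : IsA1Star (L := L) A₁) (h₂ : IsA1Star (L := L) A₂)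
    (h : A₁ ≤ A₂) : A₁ = A₂ := by
  obtain ⟨halg₁, t₁, hT₁, htr₁⟩ := h₁
  obtain ⟨halg₂, t₂, hT₂, htr₂⟩ := h₂
  have hK : fracField (L := L) A₁ ≤ fracField (L := L) A₂ :=
    Subfield.closure_mono (Set.image_mono h)
  have hinj : Function.Injective (algebraMap B L) := IsFractionRing.injective B L
  refine le_antisymm h fun a ha => ?_
  by_cases hcase : ∃ x ∈ A₂, algebraMap B L x ∉ fracField (L := L) A₁
  · exfalso
    obtain ⟨x, hx, hα⟩ := hcase
    have hα₂ : algebraMap B L x ∈ fracField (L := L) A₂ := Subfield.subset_closure ⟨x, hx, rfl⟩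
    have hα1 : algebraMap B L x ∈
        Subring.closure ((fracField (L := L) A₁ : Set L) ∪ {t₁}) := by
      rw [← hT₁]; exact Subring.subset_closure (Or.inl ⟨x, rfl⟩)
    exact aux_false (B := B) _ _ hK t₁ t₂ _ hT₁ hT₂ htr₂ hα₂ hα hα1
  · push_neg at hcase
    exact aux_mem hinj A₁ halg₁ a (hcase a ha)
end

section
/- Let B be a domain and A a subring of B such that A is algebraically closed in B and B localized at A∖{0} is a polynomial ring in one variable over Frac(A). Then B ∩ Frac(A) = A (intersection inside Frac(B)) and A is factorially closed in B. -/
/-- The image of `eval₂` at `t` over a subfield `K ⊆ L` is the subring generated by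
`K ∪ {t}`. -/
lemma range_eval₂_aux {L : Type*} [Field L] (K : Subfield L) (t : L) :
    ((Polynomial.eval₂RingHom K.subtype t).range : Set L) =
      (Subring.closure ((K : Set L) ∪ {t}) : Set L) := by
  apply le_antisymm
  · rintro _ ⟨p, rfl⟩
    simp only [Polynomial.coe_eval₂RingHom]
    induction p using Polynomial.induction_on with
    | C a =>
        rw [Polynomial.eval₂_C]
        exact Subring.subset_closure (Or.inl a.2)
    | add p q hp hq =>
        rw [Polynomial.eval₂_add]
        exact Subring.add_mem _ hp hq
    | monomial n a h =>
        rw [Polynomial.eval₂_mul, Polynomial.eval₂_X_pow] at h ⊢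
        rw [pow_succ, ← mul_assoc]
        exact Subring.mul_mem _ h (Subring.subset_closure (Or.inr rfl))
  · intro x hx
    have hle : Subring.closure ((K : Set L) ∪ {t}) ≤
        (Polynomial.eval₂RingHom K.subtype t).range := by
      rw [Subring.closure_le]
      rintro x (hx | hx)
      · exact ⟨Polynomial.C ⟨x, hx⟩, by simp⟩
      · exact ⟨Polynomial.X, by simp [Set.mem_singleton_iff.mp hx]⟩
    exact hle hx

/-- If `A ∈ 𝒜₁*(B)` then `B ∩ Frac A = A` (inside `Frac B`) and `A` is factorially
closed in `B`. -/
theorem stmt8 {B L : Type*} [CommRing B] [IsDomain B]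
    [Field L] [Algebra B L] [IsFractionRing B L]
    (A : Subring B) (hA : IsA1Star (L := L) A) :
    (∀ x : B, algebraMap B L x ∈ fracField (L := L) A ↔ x ∈ A) ∧
    (∀ x y : B, x ≠ 0 → y ≠ 0 → x * y ∈ A → x ∈ A ∧ y ∈ A) := by
  set f := algebraMap B L with hf
  have hfinj : Function.Injective f := IsFractionRing.injective B L
  -- Part 1
  have part1 : ∀ x : B, f x ∈ fracField (L := L) A ↔ x ∈ A := by
    intro x
    constructor
    · intro hx
      rw [fracField, show (f '' A : Set L) = ((A.map f : Subring L) : Set L) from rfl] at hx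
      rw [Subfield.mem_closure_iff] at hx
      obtain ⟨y, hy, z, hz, hyz⟩ := hx
      rw [Subring.closure_eq] at hy hz
      obtain ⟨a, ha, rfl⟩ := hy
      obtain ⟨b, hb, rfl⟩ := hz
      by_cases hb0 : b = 0
      · subst hb0
        simp only [map_zero, div_zero] at hyz
        have : x = 0 := hfinj (by rw [← hyz, map_zero])
        exact this ▸ A.zero_mem
      · have hbL : f b ≠ 0 := fun h => hb0 (hfinj (by rw [h, map_zero]))
        have hbx : b * x = a := by
          apply hfinj
          rw [map_mul, ← hyz]
          field_simp
        refine hA.1 x ⟨Polynomial.C ⟨b, hb⟩ * Polynomial.X - Polynomial.C ⟨a, ha⟩, ?_, ?_⟩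
        · intro h
          have := congrArg (Polynomial.coeff · 1) h
          simp only [Polynomial.coeff_sub, Polynomial.coeff_C_mul, Polynomial.coeff_X_one,
            mul_one, Polynomial.coeff_C, Polynomial.coeff_zero] at this
          exact hb0 (by simpa [Subtype.ext_iff] using this)
        · simp only [Polynomial.eval₂_sub, Polynomial.eval₂_mul, Polynomial.eval₂_C,
            Polynomial.eval₂_X, Subfield.coe_subtype]
          rw [sub_eq_zero]
          exact_mod_cast hbx
    · intro hx
      exact Subfield.subset_closure ⟨x, hx, rfl⟩
  refine ⟨part1, ?_⟩
  intro x y hx hy hxy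
  set K := fracField (L := L) A with hK
  obtain ⟨t, heq, htrans⟩ := hA.2
  set φ := Polynomial.eval₂RingHom K.subtype t with hφ
  have hφinj : Function.Injective φ := by
    intro p q h
    have : Polynomial.eval₂ K.subtype t (p - q) = 0 := by
      rw [Polynomial.eval₂_sub, sub_eq_zero]
      exact h
    exact sub_eq_zero.mp (htrans (p - q) this)
  have hmem : ∀ z : B, ∃ p : Polynomial ↥K, φ p = f z := by
    intro z
    have h1 : f z ∈ Subring.closure (Set.range f ∪ (K : Set L)) :=
      Subring.subset_closure (Or.inl ⟨z, rfl⟩)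
    rw [heq] at h1
    have h2 : f z ∈ ((Polynomial.eval₂RingHom K.subtype t).range : Set L) := by
      rw [range_eval₂_aux]; exact h1
    exact h2
  obtain ⟨p, hp⟩ := hmem x
  obtain ⟨q, hq⟩ := hmem y
  have hxyK : f (x * y) ∈ K := (part1 (x * y)).mpr hxy
  have hpq : p * q = Polynomial.C ⟨f (x * y), hxyK⟩ := by
    apply hφinj
    rw [map_mul, hp, hq, ← map_mul]
    simp [hφ, Polynomial.eval₂RingHom]
  have hp0 : p ≠ 0 := by
    intro h
    apply hx
    apply hfinj
    rw [← hp, h, map_zero, map_zero]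
  have hq0 : q ≠ 0 := by
    intro h
    apply hy
    apply hfinj
    rw [← hq, h, map_zero, map_zero]
  have hdeg : p.natDegree + q.natDegree = 0 := by
    rw [← Polynomial.natDegree_mul hp0 hq0, hpq, Polynomial.natDegree_C]
  have hpdeg : p.natDegree = 0 := Nat.eq_zero_of_add_eq_zero_right hdeg
  have hqdeg : q.natDegree = 0 := Nat.eq_zero_of_add_eq_zero_left hdeg
  have hpC : p = Polynomial.C (p.coeff 0) := (Polynomial.eq_C_of_natDegree_eq_zero hpdeg)
  have hqC : q = Polynomial.C (q.coeff 0) := (Polynomial.eq_C_of_natDegree_eq_zero hqdeg)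
  constructor
  · apply (part1 x).mp
    rw [← hp, hpC]
    simp only [hφ, Polynomial.coe_eval₂RingHom, Polynomial.eval₂_C, Subfield.coe_subtype]
    exact (p.coeff 0).2
  · apply (part1 y).mp
    rw [← hq, hqC]
    simp only [hφ, Polynomial.coe_eval₂RingHom, Polynomial.eval₂_C, Subfield.coe_subtype]
    exact (q.coeff 0).2
end

section
/- Let B be a domain of characteristic zero, A a subring of B which is algebraically closed in B with trdeg(B : A) = 1, such that B localized at A∖{0} equals Frac(A)[t] for some t ∈ B, and suppose B is finitely generated as an A-algebra. Then there exists a nonzero locally nilpotent derivation D : B → B with ker D = A. -/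
/-- If `A` is a subring of a domain `B` of characteristic zero which is algebraically
closed in `B`, with `trdeg (B : A) = 1`, such that `B_A = Frac(A)[t]` for some `t ∈ B`,
and `B` is a finitely generated `A`-algebra, then there is a nonzero locally nilpotent
derivation of `B` with kernel `A`. -/
theorem stmt9 {B L : Type*} [CommRing B] [IsDomain B] [CharZero B]
    [Field L] [Algebra B L] [IsFractionRing B L]
    (A : Subring B)
    (halg : ∀ x : B, (∃ p : Polynomial ↥A, p ≠ 0 ∧ Polynomial.eval₂ A.subtype x p = 0) →
      x ∈ A)
    (htr1 : ∃ x : B, Transcendental ↥A x)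
    (htr2 : ∀ x : Fin 2 → B, ¬ AlgebraicIndependent ↥A x)
    (t : B)
    (hBA : Subring.closure (Set.range (algebraMap B L) ∪ ((fracField (L := L) A) : Set L)) =
      Subring.closure (((fracField (L := L) A) : Set L) ∪ {algebraMap B L t}))
    (ht : ∀ p : Polynomial ↥(fracField (L := L) A),
      Polynomial.eval₂ (fracField (L := L) A).subtype (algebraMap B L t) p = 0 → p = 0)
    (hfg : (⊤ : Subalgebra ↥A B).FG) :
    ∃ D : B → B, IsLND D ∧ D ≠ 0 ∧ {x : B | D x = 0} = (A : Set B) := by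
  classical
  set φ : B →+* L := (algebraMap B L : B →+* L) with hφdef
  have hφ : Function.Injective φ := IsFractionRing.injective B L
  set F : Subfield L := fracField (L := L) A with hFdef
  set E : Polynomial ↥F →+* L := Polynomial.eval₂RingHom F.subtype (φ t) with hEdef
  have hE0 : ∀ p : Polynomial ↥F, E p = 0 → p = 0 := fun p hp => ht p hp
  have hE_inj : Function.Injective E := by
    intro p q h
    have h2 : E (p - q) = 0 := by rw [map_sub, h, sub_self]
    exact sub_eq_zero.mp (hE0 _ h2)
  have hEC : ∀ c : ↥F, E (Polynomial.C c) = (c : L) := fun c => Polynomial.eval₂_C _ _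
  have hEX : E Polynomial.X = φ t := Polynomial.eval₂_X _ _
  -- every element of B (through φ) lies in the range of E
  have hrange : ∀ b : B, ∃ p : Polynomial ↥F, E p = φ b := by
    intro b
    have h1 : φ b ∈ Subring.closure (Set.range (algebraMap B L) ∪ (F : Set L)) :=
      Subring.subset_closure (Or.inl ⟨b, rfl⟩)
    rw [hBA] at h1
    have h2 : Subring.closure ((F : Set L) ∪ {algebraMap B L t}) ≤ E.range := by
      apply Subring.closure_le.mpr
      rintro x (hx | hx)
      · exact ⟨Polynomial.C ⟨x, hx⟩, hEC _⟩
      · rw [Set.mem_singleton_iff] at hx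
        exact ⟨Polynomial.X, by rw [hEX, hx]⟩
    exact h2 h1
  choose P hP using hrange
  have hP_unique : ∀ (b : B) (p : Polynomial ↥F), E p = φ b → p = P b :=
    fun b p h => hE_inj (h.trans (hP b).symm)
  -- membership of φ(A) in F
  have hFA : ∀ a : B, a ∈ A → φ a ∈ F := fun a ha => Subfield.subset_closure ⟨a, ha, rfl⟩
  -- P of elements of A, of t, additivity, multiplicativity
  have hPA : ∀ (a : B) (ha : a ∈ A), P a = Polynomial.C ⟨φ a, hFA a ha⟩ :=
    fun a ha => (hP_unique a _ (hEC _)).symm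
  have hPt : P t = Polynomial.X := (hP_unique t _ hEX).symm
  have hPadd : ∀ x y : B, P (x + y) = P x + P y := by
    intro x y
    refine (hP_unique _ _ ?_).symm
    rw [map_add, hP, hP, map_add]
  have hPmul : ∀ x y : B, P (x * y) = P x * P y := by
    intro x y
    refine (hP_unique _ _ ?_).symm
    rw [map_mul, hP, hP, map_mul]
  -- denominators: every element of F is a quotient of elements of φ(A)
  have hden : ∀ c : ↥F, ∃ q ∈ A, q ≠ 0 ∧ ∃ p ∈ A, (c : L) * φ q = φ p := by
    intro c
    have hc : (c : L) ∈ Subfield.closure (φ '' A) := c.2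
    rw [Subfield.mem_closure_iff] at hc
    obtain ⟨y, hy, z, hz, hyz⟩ := hc
    have hmap : Subring.closure ((φ : B →+* L) '' (A : Set B)) = A.map φ := by
      rw [← Subring.coe_map, Subring.closure_eq]
    rw [hmap] at hy hz
    obtain ⟨p', hp', rfl⟩ := hy
    obtain ⟨q', hq', rfl⟩ := hz
    by_cases hq0 : q' = 0
    · refine ⟨1, A.one_mem, one_ne_zero, 0, A.zero_mem, ?_⟩
      rw [← hyz, hq0, map_zero, div_zero, zero_mul]
    · refine ⟨q', hq', hq0, p', hp', ?_⟩
      rw [← hyz]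
      have hq'0 : φ q' ≠ 0 := fun h => hq0 (hφ (h.trans (map_zero φ).symm))
      exact div_mul_cancel₀ _ hq'0
  -- clearing denominators of values of E using an element of A
  have hclear : ∀ p : Polynomial ↥F, ∃ a0 ∈ A, a0 ≠ 0 ∧ ∃ b' : B, φ a0 * E p = φ b' := by
    intro p
    induction p using Polynomial.induction_on with
    | C c =>
      obtain ⟨q, hq, hq0, p', hp', hcp⟩ := hden c
      exact ⟨q, hq, hq0, p', by rw [hEC, mul_comm, hcp]⟩
    | add p q hp hq =>
      obtain ⟨a1, ha1, ha10, b1, hb1⟩ := hp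
      obtain ⟨a2, ha2, ha20, b2, hb2⟩ := hq
      refine ⟨a1 * a2, A.mul_mem ha1 ha2, mul_ne_zero ha10 ha20,
        a2 * b1 + a1 * b2, ?_⟩
      have h3 : φ (a1 * a2) * E (p + q) = φ a2 * (φ a1 * E p) + φ a1 * (φ a2 * E q) := by
        rw [map_add, map_mul]; ring
      rw [h3, hb1, hb2, map_add, map_mul, map_mul]
    | monomial n c ih =>
      obtain ⟨a1, ha1, ha10, b1, hb1⟩ := ih
      refine ⟨a1, ha1, ha10, b1 * t, ?_⟩
      have h4 : (Polynomial.C c * Polynomial.X ^ (n + 1) : Polynomial ↥F) =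
          (Polynomial.C c * Polynomial.X ^ n) * Polynomial.X := by rw [pow_succ, ← mul_assoc]
      rw [h4, map_mul, hEX, ← mul_assoc, hb1, ← map_mul]
    -- common denominator for the derivatives of the generators
  obtain ⟨s, hs⟩ := hfg
  choose a0 ha0A ha00 b0 hb0 using hclear
  set dP : B → Polynomial ↥F := fun b => Polynomial.derivative (P b) with hdPdef
  set a : B := ∏ g ∈ s, a0 (dP g) with hadef
  have haA : a ∈ A := A.prod_mem (fun g _ => ha0A _)
  have ha0 : a ≠ 0 := Finset.prod_ne_zero_iff.mpr (fun g _ => ha00 _)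
  have hgen : ∀ g ∈ (s : Set B), ∃ b' : B, φ a * E (dP g) = φ b' := by
    intro g hg
    refine ⟨(∏ x ∈ s.erase g, a0 (dP x)) * b0 (dP g), ?_⟩
    have h1 : a = a0 (dP g) * ∏ x ∈ s.erase g, a0 (dP x) :=
      (Finset.mul_prod_erase s _ hg).symm
    calc φ a * E (dP g)
        = φ (∏ x ∈ s.erase g, a0 (dP x)) * (φ (a0 (dP g)) * E (dP g)) := by
          rw [h1, map_mul]; ring
      _ = φ ((∏ x ∈ s.erase g, a0 (dP x)) * b0 (dP g)) := by
          rw [hb0, map_mul]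
  have hall : ∀ b : B, ∃ b' : B, φ a * E (dP b) = φ b' := by
    intro b
    have hb : b ∈ Algebra.adjoin ↥A (s : Set B) := by rw [hs]; trivial
    induction hb using Algebra.adjoin_induction with
    | mem x hx => exact hgen x hx
    | algebraMap r =>
      refine ⟨0, ?_⟩
      have : P ((r : B)) = Polynomial.C ⟨φ (r : B), hFA _ r.2⟩ := hPA _ r.2
      have hdr : dP ((r : B)) = 0 := by
        rw [hdPdef]; simp only; rw [this, Polynomial.derivative_C]
      have : algebraMap ↥A B r = (r : B) := rfl
      rw [this, hdr, map_zero, mul_zero, map_zero]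
    | add x y hx hy ihx ihy =>
      obtain ⟨bx, hbx⟩ := ihx
      obtain ⟨by', hby⟩ := ihy
      refine ⟨bx + by', ?_⟩
      have hdxy : dP (x + y) = dP x + dP y := by
        rw [hdPdef]; simp only; rw [hPadd, Polynomial.derivative_add]
      rw [hdxy, map_add, mul_add, hbx, hby, map_add]
    | mul x y hx hy ihx ihy =>
      obtain ⟨bx, hbx⟩ := ihx
      obtain ⟨by', hby⟩ := ihy
      refine ⟨y * bx + x * by', ?_⟩
      have hdxy : dP (x * y) = dP x * P y + P x * dP y := by
        rw [hdPdef]; simp only; rw [hPmul, Polynomial.derivative_mul]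
      calc φ a * E (dP (x * y))
          = φ y * (φ a * E (dP x)) + φ x * (φ a * E (dP y)) := by
            rw [hdxy, map_add, map_mul, map_mul, hP, hP]; ring
        _ = φ (y * bx + x * by') := by rw [hbx, hby, map_add, map_mul, map_mul]
  choose D hD using hall
  -- aF : the image of a in F
  set aF : ↥F := ⟨φ a, hFA a haA⟩ with haFdef
  have hEaF : E (Polynomial.C aF) = φ a := hEC aF
  -- P (D b) = C aF * derivative (P b)
  have hPD : ∀ b : B, P (D b) = Polynomial.C aF * dP b := by
    intro b
    refine (hP_unique _ _ ?_).symm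
    rw [map_mul, hEaF, hD]
    -- characteristic zero instances
  haveI : CharZero L := by
    refine ⟨fun m n h => ?_⟩
    have : φ (m : B) = φ (n : B) := by rw [map_natCast, map_natCast, h]
    exact_mod_cast hφ this
  -- additivity
  have hDadd : ∀ x y : B, D (x + y) = D x + D y := by
    intro x y
    apply hφ
    have hdxy : dP (x + y) = dP x + dP y := by
      simp only [hdPdef]; rw [hPadd, Polynomial.derivative_add]
    rw [← hD (x + y), hdxy, map_add, mul_add, hD x, hD y, ← map_add]
  -- Leibniz rule
  have hDmul : ∀ x y : B, D (x * y) = x * D y + D x * y := by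
    intro x y
    apply hφ
    have hdxy : dP (x * y) = dP x * P y + P x * dP y := by
      simp only [hdPdef]; rw [hPmul, Polynomial.derivative_mul]
    calc φ (D (x * y)) = φ a * E (dP (x * y)) := (hD _).symm
      _ = φ x * (φ a * E (dP y)) + φ a * E (dP x) * φ y := by
          rw [hdxy, map_add, map_mul, map_mul, hP, hP]; ring
      _ = φ (x * D y + D x * y) := by rw [hD, hD, map_add, map_mul, map_mul]
  -- iterates
  have hPDn : ∀ (n : ℕ) (b : B),
      P (D^[n] b) = (Polynomial.C aF) ^ n * (Polynomial.derivative^[n] (P b)) := by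
    intro n
    induction n with
    | zero => intro b; simp
    | succ n ih =>
      intro b
      rw [Function.iterate_succ_apply, ih (D b), hPD]
      simp only [hdPdef]
      rw [Polynomial.iterate_derivative_C_mul, ← Function.iterate_succ_apply, pow_succ]
      ring
  have hnil : ∀ b : B, ∃ n : ℕ, D^[n] b = 0 := by
    intro b
    refine ⟨(P b).natDegree + 1, ?_⟩
    apply hφ
    rw [map_zero, ← hP, hPDn,
      Polynomial.iterate_derivative_eq_zero (Nat.lt_succ_self _), mul_zero, map_zero]
  -- nonvanishing
  have hφa : φ a ≠ 0 := fun h => ha0 (hφ (h.trans (map_zero φ).symm))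
  have hDt : D t ≠ 0 := by
    intro h
    apply hφa
    have hdt : dP t = 1 := by
      simp only [hdPdef]; rw [hPt, Polynomial.derivative_X]
    have : φ (D t) = φ a := by rw [← hD, hdt, map_one, mul_one]
    rw [← this, h, map_zero]
  -- kernel ⊇ A
  have hker2 : ∀ x : B, x ∈ A → D x = 0 := by
    intro x hx
    apply hφ
    have hdx : dP x = 0 := by
      simp only [hdPdef]; rw [hPA x hx, Polynomial.derivative_C]
    rw [← hD, hdx, map_zero, mul_zero, map_zero]
  -- kernel ⊆ A
  have hker1 : ∀ x : B, D x = 0 → x ∈ A := by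
    intro x hx
    have h1 : φ a * E (dP x) = 0 := by rw [hD, hx, map_zero]
    have h2 : E (dP x) = 0 := by
      rcases mul_eq_zero.mp h1 with h | h
      · exact absurd h hφa
      · exact h
    have h3 : Polynomial.derivative (P x) = 0 := hE0 _ h2
    have h4 : P x = Polynomial.C ((P x).coeff 0) := Polynomial.eq_C_of_derivative_eq_zero h3
    set c : ↥F := (P x).coeff 0 with hcdef
    have h5 : φ x = (c : L) := by rw [← hP x, h4, hEC]
    obtain ⟨q, hq, hq0, p, hp, hcq⟩ := hden c
    have h6 : x * q = p := by
      apply hφ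
      rw [map_mul, h5, hcq]
    apply halg
    refine ⟨Polynomial.C ⟨q, hq⟩ * Polynomial.X - Polynomial.C ⟨p, hp⟩, ?_, ?_⟩
    · intro hz
      apply hq0
      have := congrArg (fun r => Polynomial.coeff r 1) hz
      simp only [Polynomial.coeff_sub, Polynomial.coeff_C_mul, Polynomial.coeff_X_one,
        Polynomial.coeff_zero, mul_one, Polynomial.coeff_C] at this
      simpa using congrArg (Subtype.val) this
    · have : Polynomial.eval₂ A.subtype x
          (Polynomial.C ⟨q, hq⟩ * Polynomial.X - Polynomial.C ⟨p, hp⟩) = q * x - p := by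
        simp [Polynomial.eval₂_sub, Polynomial.eval₂_mul]
      rw [this, mul_comm, h6, sub_self]
  refine ⟨D, ⟨hDadd, hDmul, hnil⟩, fun h => hDt (by rw [h]; rfl), ?_⟩
  ext x
  exact ⟨fun hx => hker1 x hx, fun hx => hker2 x hx⟩
end

section
/- Let B be an algebra over a field k of characteristic zero, D a locally nilpotent derivation of B with kernel A, k̄ an extension field of k, B̄ = k̄ ⊗_k B, Ā = k̄ ⊗_k A, and D̄ the induced locally nilpotent derivation of B̄. Then the plinth ideal satisfies pl(D̄) = pl(D)·Ā, where pl(D) = D(B) ∩ A and pl(D̄) = D̄(B̄) ∩ Ā. -/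
/-!
Choose a `k`-basis `(eᵢ)` of `k̄`. Every element of `k̄ ⊗ B` is uniquely `∑ eᵢ ⊗ bᵢ`, and `D̄`
acts on the coefficients `bᵢ` by `D`; hence an element of `D̄(B̄) ∩ ker D̄` has all its
coefficients in `pl(D)`, and `eᵢ ⊗ bᵢ = (eᵢ ⊗ 1)(1 ⊗ bᵢ)` with `eᵢ ⊗ 1 ∈ Ā`. Conversely, the
plinth of any derivation is an ideal of its kernel, since `a · D b = D (a b)` when `D a = 0`.
-/

open TensorProduct

namespace LinearMap

def plinth {R M : Type*} [CommRing R] [AddCommGroup M] [Module R M] (f : M →ₗ[R] M) :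
    Submodule R M :=
  range f ⊓ ker f

section Leibniz

variable {R B : Type*} [CommRing R] [CommRing B] [Algebra R B] {D : B →ₗ[R] B}

theorem map_one_eq_zero_of_leibniz (hleib : ∀ a b : B, D (a * b) = a * D b + D a * b) :
    D 1 = 0 := by
  simpa using hleib 1 1

theorem mul_mem_plinth_of_leibniz (hleib : ∀ a b : B, D (a * b) = a * D b + D a * b)
    {a p : B} (ha : D a = 0) (hp : p ∈ D.plinth) : a * p ∈ D.plinth := by
  obtain ⟨⟨b, rfl⟩, hp⟩ := hp
  refine ⟨⟨a * b, by rw [hleib, ha, zero_mul, add_zero]⟩, show D (a * D b) = 0 from ?_⟩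
  rw [hleib, ha, zero_mul, add_zero, mem_ker.mp hp, mul_zero]

theorem baseChange_leibniz (A : Type*) [CommRing A] [Algebra R A]
    (hleib : ∀ a b : B, D (a * b) = a * D b + D a * b) (u v : A ⊗[R] B) :
    D.baseChange A (u * v) = u * D.baseChange A v + D.baseChange A u * v := by
  induction u using TensorProduct.induction_on with
  | zero => simp
  | add u₁ u₂ h₁ h₂ => simp only [add_mul, map_add, h₁, h₂]; ring
  | tmul c m =>
    induction v using TensorProduct.induction_on with
    | zero => simp
    | add v₁ v₂ h₁ h₂ => simp only [mul_add, map_add, h₁, h₂]; ring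
    | tmul d n =>
      simp only [Algebra.TensorProduct.tmul_mul_tmul, baseChange_tmul, hleib m n, tmul_add]

end Leibniz

end LinearMap

section BaseChange

variable {R A M N P ι : Type*} [CommRing R] [CommRing A] [Algebra R A]
  [AddCommGroup M] [Module R M] [AddCommGroup N] [Module R N] [AddCommGroup P] [Module R P]

theorem Submodule.baseChange_ker_le (f : N →ₗ[R] P) :
    (LinearMap.ker f).baseChange A ≤ LinearMap.ker (f.baseChange A) := by
  rintro _ ⟨y, rfl⟩
  rw [LinearMap.mem_ker, ← LinearMap.comp_apply, ← LinearMap.baseChange_comp,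
    LinearMap.comp_ker_subtype, LinearMap.baseChange_zero, LinearMap.zero_apply]

theorem LinearMap.tmul_mem_plinth_baseChange {f : N →ₗ[R] N} {p : N} (hp : p ∈ f.plinth)
    (a : A) : a ⊗ₜ[R] p ∈ (f.baseChange A).plinth := by
  obtain ⟨⟨n, rfl⟩, hp⟩ := hp
  exact ⟨⟨a ⊗ₜ n, rfl⟩, by simp [mem_ker.mp hp]⟩

variable [DecidableEq ι]

theorem TensorProduct.equivFinsuppOfBasisLeft_lTensor (b : Module.Basis ι R M) (f : N →ₗ[R] P)
    (x : M ⊗[R] N) :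
    equivFinsuppOfBasisLeft b (f.lTensor M x) =
      (equivFinsuppOfBasisLeft b x).mapRange f f.map_zero := by
  induction x using TensorProduct.induction_on with
  | zero => simp
  | tmul m n => ext i; simp
  | add x y hx hy => simp [hx, hy, Finsupp.mapRange_add]

theorem LinearMap.exists_sum_tmul_of_mem_plinth_baseChange (b : Module.Basis ι R A)
    {f : N →ₗ[R] N} {x : A ⊗[R] N} (hx : x ∈ (f.baseChange A).plinth) :
    ∃ c : ι →₀ N, (∀ i, c i ∈ f.plinth) ∧ (c.sum fun i n ↦ b i ⊗ₜ n) = x := by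
  obtain ⟨⟨y, rfl⟩, hx⟩ := hx
  have coord (z : A ⊗[R] N) (i : ι) :
      equivFinsuppOfBasisLeft b (f.baseChange A z) i = f (equivFinsuppOfBasisLeft b z i) := by
    rw [baseChange_eq_ltensor, equivFinsuppOfBasisLeft_lTensor, Finsupp.mapRange_apply]
  refine ⟨equivFinsuppOfBasisLeft b (f.baseChange A y), fun i ↦ ⟨⟨_, (coord y i).symm⟩, ?_⟩, ?_⟩
  · change f _ = 0
    rw [← coord, mem_ker.mp hx, map_zero, Finsupp.zero_apply]
  · rw [← equivFinsuppOfBasisLeft_symm_apply, LinearEquiv.symm_apply_apply]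

end BaseChange

theorem stmt17_general {k k' B : Type*} [Field k] [Field k'] [Algebra k k']
    [CommRing B] [Algebra k B]
    (D : B →ₗ[k] B)
    (hleib : ∀ a b : B, D (a * b) = a * D b + D a * b) :
    Set.range ⇑(LinearMap.baseChange k' D) ∩
        {x : k' ⊗[k] B | LinearMap.baseChange k' D x = 0} =
      ↑(AddSubgroup.closure
        {y : k' ⊗[k] B | ∃ a ∈ (Submodule.baseChange k' (LinearMap.ker D) : Set (k' ⊗[k] B)),
          ∃ p ∈ Set.range ⇑D ∩ {x : B | D x = 0}, y = a * ((1 : k') ⊗ₜ[k] p)}) := by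
  classical
  change ((D.baseChange k').plinth : Set (k' ⊗[k] B)) = _
  apply subset_antisymm
  · intro x hx
    let b := Module.Basis.ofVectorSpace k k'
    obtain ⟨c, hc, rfl⟩ := D.exists_sum_tmul_of_mem_plinth_baseChange b hx
    refine AddSubgroup.sum_mem _ fun i _ ↦ AddSubgroup.subset_closure ?_
    refine ⟨b i ⊗ₜ 1, Submodule.tmul_mem_baseChange_of_mem _ ?_, c i, hc i, ?_⟩
    · exact D.map_one_eq_zero_of_leibniz hleib
    · rw [Algebra.TensorProduct.tmul_mul_tmul, one_mul, mul_one]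
  · rw [← (D.baseChange k').plinth.coe_toAddSubgroup, SetLike.coe_subset_coe,
      AddSubgroup.closure_le]
    rintro _ ⟨a, ha, p, hp, rfl⟩
    exact LinearMap.mul_mem_plinth_of_leibniz (LinearMap.baseChange_leibniz k' hleib)
      (Submodule.baseChange_ker_le D ha) (LinearMap.tmul_mem_plinth_baseChange hp 1)

/-- Base change of the plinth ideal: for a `k`-linear locally nilpotent derivation `D`
of a `k`-algebra `B` (`k` of characteristic zero) with kernel `A`, extension field
`k̄/k`, `B̄ = k̄ ⊗[k] B`, `Ā = k̄ ⊗[k] A` and induced derivation `D̄`, one has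
`pl(D̄) = pl(D)·Ā`, where `pl(D) = D(B) ∩ A` and `pl(D̄) = D̄(B̄) ∩ Ā`.
Here `pl(D)·Ā` is the set of finite sums of products `a * (1 ⊗ p)` with `a ∈ Ā`,
`p ∈ pl(D)`. -/
theorem stmt17 {k k' B : Type*} [Field k] [CharZero k] [Field k'] [Algebra k k']
    [CommRing B] [Algebra k B]
    (D : B →ₗ[k] B)
    (hleib : ∀ a b : B, D (a * b) = a * D b + D a * b)
    (hlnd : ∀ x : B, ∃ n : ℕ, (⇑D)^[n] x = 0) :
    Set.range ⇑(LinearMap.baseChange k' D) ∩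
        {x : k' ⊗[k] B | LinearMap.baseChange k' D x = 0} =
      ↑(AddSubgroup.closure
        {y : k' ⊗[k] B | ∃ a ∈ (Submodule.baseChange k' (LinearMap.ker D) : Set (k' ⊗[k] B)),
          ∃ p ∈ Set.range ⇑D ∩ {x : B | D x = 0}, y = a * ((1 : k') ⊗ₜ[k] p)}) :=
  stmt17_general D hleib
end

section
/- Let A be an algebra over a field k, K/k an algebraic Galois extension with group G, and A_K = K ⊗_k A. For θ ∈ G let θ̃ be the A-automorphism of A_K with θ̃(λ⊗a) = θ(λ)⊗a. If b ∈ A_K satisfies: for every θ ∈ G there exists λ ∈ K^* with θ̃(b) = λb, then there exists μ ∈ K^* such that μb ∈ A (identifying A with 1 ⊗ A ⊆ A_K). -/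
/-!
Fix a `k`-basis of `A`; it is also a `K`-basis of `A_K`, and `θ̃` acts on coordinates through `θ`.
Hence an element of `A_K` fixed by every `θ̃` has Galois-invariant coordinates, which lie in `k`,
so it lies in `A`. If `θ̃ b = λ b` and `c` is a nonzero coordinate of `b`, then `θ c = λ c`, so
`c⁻¹ b` is fixed by every `θ̃`.
-/

open TensorProduct

namespace Module.Basis

variable {k K A ι : Type*} [CommSemiring k] [CommSemiring K] [Algebra k K] [Semiring A]
  [Algebra k A]

theorem baseChange_repr_map (B : Basis ι k A) (σ : K →ₐ[k] K) (x : K ⊗[k] A) (i : ι) :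
    (B.baseChange K).repr (Algebra.TensorProduct.map σ (AlgHom.id k A) x) i =
      σ ((B.baseChange K).repr x i) := by
  induction x using TensorProduct.induction_on with
  | zero => simp
  | tmul c a => simp [Algebra.smul_def]
  | add u v hu hv => simp only [map_add, Finsupp.add_apply, hu, hv]

end Module.Basis

namespace Algebra.TensorProduct

theorem map_id_right_smul {k K A : Type*} [CommSemiring k] [CommSemiring K] [Algebra k K]
    [Semiring A] [Algebra k A] (σ : K →ₐ[k] K) (c : K) (x : K ⊗[k] A) :
    map σ (AlgHom.id k A) (c • x) = σ c • map σ (AlgHom.id k A) x := by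
  rw [Algebra.smul_def, Algebra.smul_def, map_mul, algebraMap_apply, map_tmul, map_one]
  rfl

theorem mem_range_includeRight_of_forall_map_eq {k K A : Type*} [Field k] [Field K]
    [Algebra k K] [IsGalois k K] [Ring A] [Algebra k A] (x : K ⊗[k] A)
    (hx : ∀ θ : K ≃ₐ[k] K, map θ.toAlgHom (AlgHom.id k A) x = x) :
    x ∈ Set.range (includeRight : A →ₐ[k] K ⊗[k] A) := by
  set B := Module.Basis.ofVectorSpace k A
  have hcoeff : ∀ i, ∃ r : k, algebraMap k K r = (B.baseChange K).repr x i := fun i =>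
    (InfiniteGalois.mem_range_algebraMap_iff_fixed _).mpr fun θ => by
      simpa [B.baseChange_repr_map] using congr((B.baseChange K).repr $(hx θ) i)
  rw [← AlgHom.coe_range, ← (B.baseChange K).linearCombination_repr x,
    Finsupp.linearCombination_apply]
  refine Subalgebra.sum_mem _ fun i _ => ?_
  obtain ⟨r, hr⟩ := hcoeff i
  dsimp only
  rw [← hr, algebraMap_smul, Module.Basis.baseChange_apply]
  exact Subalgebra.smul_mem _ (AlgHom.mem_range_self _ (B i)) r

end Algebra.TensorProduct

/-- Galois descent of semi-invariant elements: let `K/k` be an algebraic Galois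
extension with group `G = Gal(K/k)`, `A` a `k`-algebra and `A_K = K ⊗_k A`.  For
`θ ∈ G` let `θ̃ = θ ⊗ id` be the induced `A`-automorphism of `A_K`.  If `b ∈ A_K`
satisfies: for every `θ` there is `λ ∈ K^*` with `θ̃ b = λ b`, then there is
`μ ∈ K^*` with `μ b ∈ A` (i.e. `μ • b` lies in the image of `A` in `A_K`). -/
theorem stmt18 {k K A : Type*} [Field k] [Field K] [Algebra k K] [IsGalois k K]
    [CommRing A] [Algebra k A]
    (b : K ⊗[k] A)
    (hb : ∀ θ : K ≃ₐ[k] K, ∃ lam : K, lam ≠ 0 ∧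
      (Algebra.TensorProduct.map θ.toAlgHom (AlgHom.id k A)) b = lam • b) :
    ∃ mu : K, mu ≠ 0 ∧
      mu • b ∈ Set.range (Algebra.TensorProduct.includeRight : A →ₐ[k] K ⊗[k] A) := by
  by_cases hb0 : b = 0
  · exact ⟨1, one_ne_zero, 0, by rw [hb0, smul_zero, map_zero]⟩
  set BK := (Module.Basis.ofVectorSpace k A).baseChange K
  obtain ⟨i, hi⟩ : ∃ i, BK.repr b i ≠ 0 := by
    by_contra! h
    exact hb0 (BK.repr.map_eq_zero_iff.mp (Finsupp.ext h))
  refine ⟨(BK.repr b i)⁻¹, inv_ne_zero hi,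
    Algebra.TensorProduct.mem_range_includeRight_of_forall_map_eq _ fun θ => ?_⟩
  obtain ⟨lam, hlam0, hlam⟩ := hb θ
  have hθ : θ (BK.repr b i) = lam * BK.repr b i := by
    simpa [BK, Module.Basis.baseChange_repr_map] using congr(BK.repr $hlam i)
  rw [Algebra.TensorProduct.map_id_right_smul, hlam, smul_smul, AlgEquiv.coe_toAlgHom,
    map_inv₀, hθ]
  field_simp
end

section
/- Let k be a field and A a k-algebra. Suppose there exists an algebraic Galois extension K/k such that K ⊗_k A is a noetherian unique factorization domain whose group of units equals K^*. Then A is a noetherian unique factorization domain and A^* = k^*. -/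
/-!
`K ⊗[k] A` is faithfully flat over `A`, so ideals and divisibility descend from `K ⊗[k] A` to `A`;
this gives noetherianity. For an irreducible `p ∣ a * b`, look at `d = gcd (1 ⊗ p) (1 ⊗ a)` in the
UFD `K ⊗[k] A`. Each `σ ⊗ id` sends `d` to an associate, which is `c_σ • d` because all units are
scalars. Rescaling `d` so that one of its coordinates in a `k`-basis of `A` equals `1` kills the
scalars `c_σ`, so the rescaled `d` is Galois-invariant and hence of the form `1 ⊗ z`. Then `z ∣ p`,
and `z` being a unit or an associate of `p` gives `p ∣ b` or `p ∣ a`. Units descend the same way: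
`1 ⊗ u = c ⊗ 1` forces `c` to be Galois-invariant, i.e. in `k`.
-/

open TensorProduct

section FaithfullyFlat

variable {A B : Type*} [CommRing A] [CommRing B] [Algebra A B] [Module.FaithfullyFlat A B]

theorem IsNoetherianRing.of_faithfullyFlat [IsNoetherianRing B] : IsNoetherianRing A := by
  rw [isNoetherianRing_iff, isNoetherian_iff']
  have map_monotone : Monotone (Ideal.map (algebraMap A B)) := fun _ _ ↦ Ideal.map_mono
  exact (map_monotone.strictMono_of_injective Ideal.map_injective_of_faithfullyFlat).wellFoundedGT

theorem dvd_of_algebraMap_dvd_of_faithfullyFlat {x y : A}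
    (h : algebraMap A B x ∣ algebraMap A B y) : x ∣ y := by
  rw [← Ideal.mem_span_singleton,
    ← Ideal.comap_map_eq_self_of_faithfullyFlat (B := B) (Ideal.span {x}),
    Ideal.mem_comap, Ideal.map_span, Set.image_singleton, Ideal.mem_span_singleton]
  exact h

end FaithfullyFlat

attribute [local instance] Algebra.TensorProduct.rightAlgebra in
instance Algebra.TensorProduct.faithfullyFlat_rightAlgebra {k K A : Type*} [Field k] [Field K]
    [Algebra k K] [CommRing A] [Algebra k A] : Module.FaithfullyFlat A (K ⊗[k] A) :=
  .of_linearEquiv _ _ (Algebra.TensorProduct.commRight k A K).symm.toLinearEquiv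

section GCDMonoid

variable {α β : Type*} [CommMonoidWithZero α] [GCDMonoid α] [CommMonoidWithZero β] [GCDMonoid β]

theorem associated_map_gcd {F : Type*} [EquivLike F α β] [MulEquivClass F α β] (f : F) (x y : α) :
    Associated (f (gcd x y)) (gcd (f x) (f y)) := by
  let e : α ≃* β := f
  change Associated (e (gcd x y)) (gcd (e x) (e y))
  refine associated_of_dvd_dvd (dvd_gcd (map_dvd e (gcd_dvd_left x y))
    (map_dvd e (gcd_dvd_right x y))) ?_
  rw [← e.apply_symm_apply (gcd (e x) (e y))]
  refine map_dvd e (dvd_gcd ?_ ?_)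
  · simpa using map_dvd e.symm (gcd_dvd_left (e x) (e y))
  · simpa using map_dvd e.symm (gcd_dvd_right (e x) (e y))

theorem Irreducible.prime_of_reflects_dvd_of_gcd_associated {M : Type*} [CommMonoidWithZero M]
    (φ : M →* β) (reflects_dvd : ∀ x y, φ x ∣ φ y → x ∣ y)
    (gcd_associated : ∀ x y, ∃ z, Associated (gcd (φ x) (φ y)) (φ z))
    {p : M} (hp : Irreducible p) : Prime p := by
  refine ⟨hp.ne_zero, hp.not_isUnit, fun a b hab ↦ ?_⟩
  obtain ⟨z, hz⟩ := gcd_associated p a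
  obtain ⟨w, hw⟩ := reflects_dvd z p (hz.symm.dvd.trans (gcd_dvd_left _ _))
  rcases hp.isUnit_or_isUnit hw with hz_unit | hw_unit
  · right
    have coprime : IsRelPrime (φ p) (φ a) :=
      gcd_isUnit_iff_isRelPrime.mp (hz.symm.isUnit (hz_unit.map φ))
    exact reflects_dvd p b (coprime.dvd_of_dvd_mul_left (map_mul φ a b ▸ map_dvd φ hab))
  · left
    have hzp : Associated z p := ⟨hw_unit.unit, hw.symm⟩
    exact reflects_dvd p a ((hzp.map φ).symm.dvd.trans (hz.symm.dvd.trans (gcd_dvd_right _ _)))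

end GCDMonoid

section GaloisDescent

variable {k K A : Type*} [Field k] [Field K] [Algebra k K] [CommRing A] [Algebra k A]

variable (A) in
noncomputable abbrev galTensor (σ : Gal(K/k)) : K ⊗[k] A ≃ₐ[k] K ⊗[k] A :=
  Algebra.TensorProduct.congr σ AlgEquiv.refl

theorem galTensor_tmul (σ : Gal(K/k)) (c : K) (a : A) : galTensor A σ (c ⊗ₜ a) = σ c ⊗ₜ a := rfl

theorem galTensor_smul (σ : Gal(K/k)) (c : K) (x : K ⊗[k] A) :
    galTensor A σ (c • x) = σ c • galTensor A σ x := by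
  rw [Algebra.smul_def, Algebra.smul_def, map_mul]
  simp [Algebra.TensorProduct.algebraMap_apply]

theorem repr_galTensor {ι : Type*} (b : Module.Basis ι k A) (σ : Gal(K/k)) (x : K ⊗[k] A)
    (i : ι) : (b.baseChange K).repr (galTensor A σ x) i = σ ((b.baseChange K).repr x i) := by
  induction x using TensorProduct.induction_on with
  | zero => simp
  | tmul c a => simp [map_smul]
  | add y z hy hz => simp only [map_add, Finsupp.add_apply, hy, hz]

variable [IsGalois k K]

theorem exists_one_tmul_eq_of_forall_galTensor_eq {x : K ⊗[k] A}
    (hx : ∀ σ : Gal(K/k), galTensor A σ x = x) : ∃ a : A, 1 ⊗ₜ a = x := by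
  let b := Module.Basis.ofVectorSpace k A
  have coord_mem : ∀ i, (b.baseChange K).repr x i ∈ Set.range (algebraMap k K) := fun i ↦
    (InfiniteGalois.mem_range_algebraMap_iff_fixed _).mpr fun σ ↦ by
      rw [← repr_galTensor, hx]
  suffices x ∈ LinearMap.range
      (Algebra.TensorProduct.includeRight : A →ₐ[k] K ⊗[k] A).toLinearMap by
    simpa using this
  rw [← (b.baseChange K).linearCombination_repr x, Finsupp.linearCombination_apply]
  refine Submodule.finsuppSum_mem _ _ _ _ fun i _ ↦ ?_
  obtain ⟨t, ht⟩ := coord_mem i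
  refine ⟨t • b i, ?_⟩
  simp [← ht, TensorProduct.smul_tmul', Algebra.algebraMap_eq_smul_one]

theorem exists_associated_one_tmul_of_forall_galTensor_eq_smul (d : K ⊗[k] A)
    (hd : ∀ σ : Gal(K/k), ∃ c : K, galTensor A σ d = c • d) :
    ∃ a : A, Associated d (1 ⊗ₜ a) := by
  rcases eq_or_ne d 0 with rfl | hd0
  · exact ⟨0, by simp⟩
  let b := (Module.Basis.ofVectorSpace k A).baseChange K
  obtain ⟨i, hi⟩ : ∃ i, b.repr d i ≠ 0 := by
    by_contra! h
    exact hd0 (b.repr.injective (Finsupp.ext (by simpa using h)))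
  set r := b.repr d i
  have fixed : ∀ σ : Gal(K/k), galTensor A σ (r⁻¹ • d) = r⁻¹ • d := fun σ ↦ by
    obtain ⟨c, hc⟩ := hd σ
    have hcr : c * r = σ r := by simpa [hc] using repr_galTensor _ σ d i
    have hc0 : c ≠ 0 := left_ne_zero_of_mul (hcr ▸ (map_ne_zero σ).mpr hi)
    rw [galTensor_smul, hc, smul_smul, map_inv₀, ← hcr]
    congr 1
    field_simp
  obtain ⟨a, ha⟩ := exists_one_tmul_eq_of_forall_galTensor_eq fixed
  refine ⟨a, (Units.mk0 r⁻¹ (inv_ne_zero hi)).map (algebraMap K (K ⊗[k] A)).toMonoidHom, ?_⟩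
  rw [ha, Algebra.smul_def, mul_comm]
  rfl

theorem exists_associated_gcd_one_tmul [GCDMonoid (K ⊗[k] A)]
    (hunits : ∀ u : (K ⊗[k] A)ˣ, ∃ c : K, (u : K ⊗[k] A) = algebraMap K (K ⊗[k] A) c)
    (x y : A) : ∃ z : A, Associated (gcd (1 ⊗ₜ x : K ⊗[k] A) (1 ⊗ₜ y)) (1 ⊗ₜ z) := by
  refine exists_associated_one_tmul_of_forall_galTensor_eq_smul _ fun σ ↦ ?_
  obtain ⟨u, hu⟩ := (associated_map_gcd (galTensor A σ) (1 ⊗ₜ x) (1 ⊗ₜ y)).symm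
  obtain ⟨c, hc⟩ := hunits u
  refine ⟨c, ?_⟩
  simp only [galTensor_tmul, map_one] at hu
  rw [← hu, hc, mul_comm, ← Algebra.smul_def]

theorem exists_eq_algebraMap_of_one_tmul_eq_algebraMap [Nontrivial A] {a : A} {c : K}
    (h : (1 ⊗ₜ a : K ⊗[k] A) = algebraMap K (K ⊗[k] A) c) : ∃ c₀ : k, a = algebraMap k A c₀ := by
  have c_fixed : ∀ σ : Gal(K/k), σ c = c := fun σ ↦
    Algebra.TensorProduct.includeLeft_injective (S := k) (algebraMap k A).injective <| by
      have h_σ := congr(galTensor A σ $h)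
      rw [galTensor_tmul, map_one, h, Algebra.TensorProduct.algebraMap_apply, galTensor_tmul] at h_σ
      simpa using h_σ.symm
  obtain ⟨c₀, rfl⟩ := (InfiniteGalois.mem_range_algebraMap_iff_fixed c).mpr c_fixed
  refine ⟨c₀, Algebra.TensorProduct.includeRight_injective (algebraMap k K).injective ?_⟩
  simpa using h

end GaloisDescent

/-- Galois descent of the UFD property: let `k` be a field, `A` a `k`-algebra, and
`K/k` an algebraic Galois extension such that `K ⊗_k A` is a noetherian unique
factorization domain with `(K ⊗_k A)^* = K^*`.  Then `A` is a noetherian unique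
factorization domain with `A^* = k^*`. -/
theorem stmt19 {k K A : Type*} [Field k] [Field K] [Algebra k K] [IsGalois k K]
    [CommRing A] [Algebra k A]
    [IsDomain (K ⊗[k] A)] [IsNoetherianRing (K ⊗[k] A)]
    [UniqueFactorizationMonoid (K ⊗[k] A)]
    (hunits : ∀ u : (K ⊗[k] A)ˣ, ∃ c : K, (u : K ⊗[k] A) = algebraMap K (K ⊗[k] A) c) :
    IsDomain A ∧ IsNoetherianRing A ∧
    (∀ [_inst : IsDomain A], UniqueFactorizationMonoid A) ∧
    (∀ u : Aˣ, ∃ c : k, (u : A) = algebraMap k A c) := by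
  classical
  let _ : Algebra A (K ⊗[k] A) := Algebra.TensorProduct.rightAlgebra
  let _ : GCDMonoid (K ⊗[k] A) := UniqueFactorizationMonoid.toGCDMonoid _
  have domain : IsDomain A :=
    (FaithfulSMul.algebraMap_injective A (K ⊗[k] A)).isDomain (algebraMap A (K ⊗[k] A))
  have noetherian : IsNoetherianRing A := .of_faithfullyFlat (B := K ⊗[k] A)
  refine ⟨domain, noetherian, ?_, fun u ↦ ?_⟩
  · intro _
    have irreducible_prime {p : A} (hp : Irreducible p) : Prime p :=
      hp.prime_of_reflects_dvd_of_gcd_associated (algebraMap A (K ⊗[k] A)).toMonoidHom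
        (fun _ _ ↦ dvd_of_algebraMap_dvd_of_faithfullyFlat) (exists_associated_gcd_one_tmul hunits)
    exact { (inferInstance : WfDvdMonoid A) with
      irreducible_iff_prime := ⟨irreducible_prime, Prime.irreducible⟩ }
  · obtain ⟨c, hc⟩ := hunits (Units.map (algebraMap A (K ⊗[k] A)) u)
    exact exists_eq_algebraMap_of_one_tmul_eq_algebraMap hc
end
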